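/- Let Q be a finite quiver without cycles and n_Q the nilpotent Lie algebra obtained by Q. Then there exists an inner product ⟨,⟩ on n_Q satisfying the following three conditions: (i) ⟨,⟩ is an algebraic Ricci soliton with Ric = −id + D, where D ∈ Der(n_Q) is diagonal with respect to the basis Path(Q); (ii) Path(Q) is an orthogonal basis with respect to ⟨,⟩; (iii) ⟨,⟩ is preserved by the action of Aut(Q) on n_Q. -/

import Mathlib

/-!
Give every vertex `v` the weight `γ(v) = 2 / (1 + N⁺(v) + N⁻(v))`, where `N⁺(v)` and `N⁻(v)`
count the paths starting and ending at `v`, and declare the paths orthogonal, `|x|²` being the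
product of `γ` over the interior vertices of `x`. Without cycles, at most one of `xy`, `yx` is a
path, and a path `z` together with `y` determines `x` in `z = xy` or `z = yx`; hence both sums
in the Ricci formula are diagonal in the basis `Path(Q)`, with eigenvalue
`r(x) = ½ Σ_{interior v} γ(v) - ½ (γ(t x) N⁺(t x) + γ(s x) N⁻(s x))`.
At the junction vertex `v` of a concatenation `xy`, `γ(v) (1 + N⁺(v) + N⁻(v)) = 2` gives
`r(xy) = r(x) + r(y) + 1`, so `D = Ric + id`, diagonal with eigenvalue `r + 1`, is a derivation.
Quiver automorphisms preserve `N⁺` and `N⁻` at interior vertices, hence the norms of paths.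
-/


open scoped Classical

noncomputable section

variable {V E : Type*}

/-- A (positive-length) path in the quiver `(V, E, s, t)`: a nonempty list of arrows
in which consecutive arrows are composable, i.e. `t αᵢ = s αᵢ₊₁`. -/
def IsPath (s t : E → V) (l : List E) : Prop :=
  l ≠ [] ∧ l.Chain' (fun a b => t a = s b)

/-- The source of a (nonempty) list of arrows, as an `Option`. -/
def src? (s : E → V) (l : List E) : Option V := l.head?.map s

/-- The target of a (nonempty) list of arrows, as an `Option`. -/
def tgt? (t : E → V) (l : List E) : Option V := l.getLast?.map t

/-- The quiver has no cycles: there is no path whose source equals its target. -/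
def NoCycles (s t : E → V) : Prop :=
  ∀ l : List E, IsPath s t l → src? s l ≠ tgt? t l

/-- `m` is the maximum of the lengths of paths of the quiver (the length of the quiver). -/
def IsMaxPathLen (s t : E → V) (m : ℕ) : Prop :=
  (∃ l : List E, IsPath s t l ∧ l.length = m) ∧ ∀ l : List E, IsPath s t l → l.length ≤ m

/-- The set `Path(Q)` of all paths of length `≥ 1`, as a subtype of lists of arrows. -/
abbrev PathQ (s t : E → V) := {l : List E // IsPath s t l}

/-- The underlying vector space of the Lie algebra `n_Q` obtained from the quiver:
the real vector space with basis `Path(Q)`. -/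
abbrev nQ (s t : E → V) := PathQ s t →₀ ℝ

/-- The Lie bracket of two basis paths: `[x, y] = xy` if the concatenation `xy` is a path,
`[x, y] = -yx` if the concatenation `yx` is a path, and `[x, y] = 0` otherwise. -/
def braBasis (s t : E → V) (x y : PathQ s t) : nQ s t :=
  if h : IsPath s t (x.val ++ y.val) then Finsupp.single ⟨x.val ++ y.val, h⟩ 1
  else if h' : IsPath s t (y.val ++ x.val) then -Finsupp.single ⟨y.val ++ x.val, h'⟩ 1
  else 0

/-- The Lie bracket of `n_Q`, extended bilinearly from basis paths. -/
def bra (s t : E → V) (u v : nQ s t) : nQ s t :=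
  u.sum fun x cx => v.sum fun y cy => (cx * cy) • braBasis s t x y

/-- The span of all brackets of elements of two subspaces of `n_Q`. -/
def braSpan (s t : E → V) (M N : Submodule ℝ (nQ s t)) : Submodule ℝ (nQ s t) :=
  Submodule.span ℝ {z | ∃ u ∈ M, ∃ v ∈ N, z = bra s t u v}

/-- The starting set `S` of a quiver of length `m`: the set of arrows `a` such that
`a x` is a path of length `m` for some path `x`. -/
def startSet (s t : E → V) (m : ℕ) : Set E :=
  {a | ∃ x : List E, IsPath s t x ∧ IsPath s t (a :: x) ∧ (a :: x).length = m}

/-- The arrow set `E' = (E ∖ S) ∪ {ab ∈ Path(Q) : a ∈ S, b ∈ E}` of the quiver `Q'`,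
realized as a set of lists of arrows of `Q`. -/
def edgesQ' (s t : E → V) (m : ℕ) : Set (List E) :=
  {l | (∃ a : E, a ∉ startSet s t m ∧ l = [a]) ∨
       (∃ a b : E, a ∈ startSet s t m ∧ IsPath s t [a, b] ∧ l = [a, b])}

/-- `L` is a decomposition of the list `l` of arrows as a path of the quiver `Q'`:
a nonempty chain of consecutively composable `Q'`-arrows whose concatenation is `l`. -/
def IsDecompQ' (s t : E → V) (m : ℕ) (L : List (List E)) (l : List E) : Prop :=
  L ≠ [] ∧ (∀ p ∈ L, p ∈ edgesQ' s t m) ∧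
    L.Chain' (fun p q => tgt? t p = src? s q) ∧ L.flatten = l

/-- `l` underlies a path of the quiver `Q'`. -/
def IsPathQ' (s t : E → V) (m : ℕ) (l : List E) : Prop :=
  ∃ L : List (List E), IsDecompQ' s t m L l

/-- `f : E → E` is an automorphism of the quiver `(V, E, s, t)`. -/
def IsQuivAut (s t : E → V) (f : E → E) : Prop :=
  Function.Bijective f ∧ ∀ x y : E, (t x = s y ↔ t (f x) = s (f y))

/-- `g` is an automorphism of the quiver whose arrow set is the set `ES` of lists of
arrows of `Q` (such as the quiver `Q'` with arrow set `edgesQ'`). -/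
def IsQuivAutOn (s t : E → V) (ES : Set (List E)) (g : List E → List E) : Prop :=
  Set.BijOn g ES ES ∧
    ∀ p ∈ ES, ∀ q ∈ ES, (tgt? t p = src? s q ↔ tgt? t (g p) = src? s (g q))

/-- The subspace `n' = span Path(Q')` of `n_Q`. -/
def nQ'span (s t : E → V) (m : ℕ) : Submodule ℝ (nQ s t) :=
  Submodule.span ℝ {u | ∃ p : PathQ s t, IsPathQ' s t m p.val ∧ u = Finsupp.single p 1}

/-- A single arrow, regarded as a path of length one. -/
def edgePath (s t : E → V) (a : E) : PathQ s t := ⟨[a], by refine ⟨List.cons_ne_nil _ _, ?_⟩; first | exact List.isChain_singleton a | exact List.chain'_singleton a | simp [List.Chain'] | constructor⟩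

/-- The normalization `x̄ = x / |x|` of a basis path `x`, with respect to the
inner product `B`. -/
def ebar (s t : E → V) (B : nQ s t →ₗ[ℝ] nQ s t →ₗ[ℝ] ℝ) (p : PathQ s t) : nQ s t :=
  (Real.sqrt (B (Finsupp.single p 1) (Finsupp.single p 1)))⁻¹ • Finsupp.single p 1

/-- The linear map `T` on `n_Q` realizes the action of the quiver automorphism `f` on
`Path(Q)`: it sends each basis path `l` to the basis path `l.map f`. -/
def ActsAs (s t : E → V) (f : E → E) (T : nQ s t →ₗ[ℝ] nQ s t) : Prop :=
  ∀ (l : List E) (h : IsPath s t l) (h' : IsPath s t (l.map f)),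
    T (Finsupp.single ⟨l, h⟩ 1) = Finsupp.single ⟨l.map f, h'⟩ 1


section WeightedForm

variable {ι : Type*} [Fintype ι] (w : ι → ℝ)

def weightedForm : (ι →₀ ℝ) →ₗ[ℝ] (ι →₀ ℝ) →ₗ[ℝ] ℝ :=
  ∑ i, w i • (LinearMap.mul ℝ ℝ).compl₁₂ (Finsupp.lapply i) (Finsupp.lapply i)

variable {w}

lemma weightedForm_apply (u v : ι →₀ ℝ) : weightedForm w u v = ∑ i, w i * (u i * v i) := by
  simp [weightedForm]

lemma weightedForm_comm (u v : ι →₀ ℝ) : weightedForm w u v = weightedForm w v u := by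
  simp only [weightedForm_apply, mul_comm (u _)]

lemma weightedForm_self_pos (hw : ∀ i, 0 < w i) {u : ι →₀ ℝ} (hu : u ≠ 0) :
    0 < weightedForm w u u := by
  obtain ⟨i, hi⟩ := Finsupp.ne_iff.mp hu
  rw [weightedForm_apply]
  exact Finset.sum_pos' (fun j _ => mul_nonneg (hw j).le (mul_self_nonneg _))
    ⟨i, Finset.mem_univ i, mul_pos (hw i) (mul_self_pos.mpr hi)⟩

lemma weightedForm_single_right (u : ι →₀ ℝ) (j : ι) (c : ℝ) :
    weightedForm w u (Finsupp.single j c) = w j * (u j * c) := by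
  rw [weightedForm_apply, Finset.sum_eq_single j] <;> simp +contextual

lemma weightedForm_single_single (i j : ι) (c d : ℝ) :
    weightedForm w (Finsupp.single i c) (Finsupp.single j d) =
      if i = j then w i * (c * d) else 0 := by
  rw [weightedForm_single_right]
  split_ifs with h <;> simp [h]

lemma eq_of_weightedForm_single_eq (hw : ∀ i, w i ≠ 0) {u v : ι →₀ ℝ}
    (h : ∀ j, weightedForm w u (Finsupp.single j 1) = weightedForm w v (Finsupp.single j 1)) :
    u = v := by
  ext j
  simpa [weightedForm_single_right, hw j] using h j

lemma weightedForm_equivMapDomain (e : ι ≃ ι) (he : ∀ i, w (e i) = w i)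
    (u v : ι →₀ ℝ) :
    weightedForm w (u.equivMapDomain e) (v.equivMapDomain e) = weightedForm w u v := by
  simp only [weightedForm_apply, Finsupp.equivMapDomain_apply]
  exact Fintype.sum_equiv e.symm _ _ fun i => by rw [← he (e.symm i), e.apply_symm_apply]

/-- Parseval's identity for the orthonormal basis `(√w j)⁻¹ • eⱼ`. -/
lemma sum_weightedForm_mul_weightedForm_single (hw : ∀ i, 0 ≤ w i) (u v : ι →₀ ℝ) :
    ∑ j, weightedForm w u (Finsupp.single j (√(w j))⁻¹) *
        weightedForm w v (Finsupp.single j (√(w j))⁻¹) = weightedForm w u v := by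
  rw [weightedForm_apply]
  refine Finset.sum_congr rfl fun j _ => ?_
  simp only [weightedForm_single_right]
  have h := Real.mul_self_sqrt (hw j)
  rcases (hw j).eq_or_lt with h0 | hpos
  · simp [← h0]
  · field_simp
    rw [sq, h]; ring

end WeightedForm

section DiagonalMap

variable {ι : Type*}

def diagonalMap (d : ι → ℝ) : (ι →₀ ℝ) →ₗ[ℝ] (ι →₀ ℝ) :=
  Finsupp.lsum ℝ fun i => d i • Finsupp.lsingle i

lemma diagonalMap_single (d : ι → ℝ) (i : ι) (c : ℝ) :
    diagonalMap d (Finsupp.single i c) = Finsupp.single i (d i * c) := by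
  simp [diagonalMap, Finsupp.smul_single]

lemma neg_id_add_diagonalMap_add_one (d : ι → ℝ) :
    -LinearMap.id + diagonalMap (fun i => d i + 1) = diagonalMap d := by
  ext i
  simp [diagonalMap_single]

end DiagonalMap

section Paths

variable {s t : E → V} {x y : List E}

lemma isPath_iff {l : List E} : IsPath s t l ↔ l ≠ [] ∧ l.IsChain (fun a b => t a = s b) :=
  Iff.rfl

lemma src?_append (y : List E) (hx : x ≠ []) : src? s (x ++ y) = src? s x := by
  cases x with
  | nil => exact absurd rfl hx
  | cons a l => simp [src?]

lemma tgt?_append (x : List E) (hy : y ≠ []) : tgt? t (x ++ y) = tgt? t y := by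
  simp [tgt?, List.getLast?_append_of_ne_nil _ hy]

lemma isPath_append_iff (hx : IsPath s t x) (hy : IsPath s t y) :
    IsPath s t (x ++ y) ↔ tgt? t x = src? s y := by
  obtain ⟨hx0, hxc⟩ := isPath_iff.mp hx
  obtain ⟨hy0, hyc⟩ := isPath_iff.mp hy
  simp only [isPath_iff, List.isChain_append, tgt?, src?, ne_eq, List.append_eq_nil_iff,
    hx0, false_and, not_false_eq_true, hxc, hyc, true_and, List.getLast?_eq_some_getLast hx0,
    List.head?_eq_some_head hy0, Option.mem_def, Option.some.injEq, forall_eq', Option.map_some]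

lemma IsPath.left_of_append (h : IsPath s t (x ++ y)) (hx : x ≠ []) : IsPath s t x :=
  ⟨hx, h.2.prefix ⟨y, rfl⟩⟩

lemma IsPath.right_of_append (h : IsPath s t (x ++ y)) (hy : y ≠ []) : IsPath s t y :=
  ⟨hy, h.2.suffix ⟨x, rfl⟩⟩

lemma IsPath.nodup (hQ : NoCycles s t) {l : List E} (h : IsPath s t l) : l.Nodup := by
  induction l with
  | nil => simp
  | cons a m ih =>
    rcases eq_or_ne m [] with rfl | hm
    · simp
    have hm' : IsPath s t m := (show IsPath s t ([a] ++ m) from h).right_of_append hm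
    refine List.nodup_cons.mpr ⟨fun hmem => ?_, ih hm'⟩
    obtain ⟨u, v, rfl⟩ := List.append_of_mem hmem
    rw [show a :: (u ++ a :: v) = (a :: u) ++ (a :: v) by simp] at h
    have hu : IsPath s t (a :: u) := h.left_of_append (by simp)
    have hv : IsPath s t (a :: v) := h.right_of_append (by simp)
    exact hQ _ hu (by rw [(isPath_append_iff hu hv).mp h]; simp [src?])

lemma finite_pathQ [Finite E] (hQ : NoCycles s t) : Finite (PathQ s t) := by
  cases nonempty_fintype E
  refine ((List.finite_length_le E (Fintype.card E)).subset fun l hl => ?_).to_subtype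
  exact (IsPath.nodup hQ hl).length_le_card

end Paths

section Endpoints

variable {s t : E → V}

def pathSource (p : PathQ s t) : V := s (p.val.head p.2.1)

def pathTarget (p : PathQ s t) : V := t (p.val.getLast p.2.1)

lemma src?_eq_pathSource (p : PathQ s t) : src? s p.val = some (pathSource p) := by
  simp [src?, pathSource, List.head?_eq_some_head p.2.1]

lemma tgt?_eq_pathTarget (p : PathQ s t) : tgt? t p.val = some (pathTarget p) := by
  simp [tgt?, pathTarget, List.getLast?_eq_some_getLast p.2.1]

lemma pathTarget_eq_pathSource {x y : PathQ s t} (h : IsPath s t (x.val ++ y.val)) :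
    pathTarget x = pathSource y := by
  simpa [tgt?_eq_pathTarget, src?_eq_pathSource] using (isPath_append_iff x.2 y.2).mp h

lemma pathSource_append {x y : PathQ s t} (h : IsPath s t (x.val ++ y.val)) :
    pathSource ⟨x.val ++ y.val, h⟩ = pathSource x := by
  simpa [src?_eq_pathSource, src?_append y.val x.2.1] using
    (src?_eq_pathSource (⟨x.val ++ y.val, h⟩ : PathQ s t)).symm

lemma pathTarget_append {x y : PathQ s t} (h : IsPath s t (x.val ++ y.val)) :
    pathTarget ⟨x.val ++ y.val, h⟩ = pathTarget y := by
  simpa [tgt?_eq_pathTarget, tgt?_append x.val y.2.1] using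
    (tgt?_eq_pathTarget (⟨x.val ++ y.val, h⟩ : PathQ s t)).symm

end Endpoints

section NoCycles

variable {s t : E → V}

lemma NoCycles.not_isPath_append_swap (hQ : NoCycles s t) {x y : List E} (hx : IsPath s t x)
    (hy : IsPath s t y) (h : IsPath s t (x ++ y)) : ¬IsPath s t (y ++ x) := fun h' =>
  hQ _ h (by rw [src?_append y hx.1, tgt?_append x hy.1, ← (isPath_append_iff hy hx).mp h'])

lemma NoCycles.append_ne_append_left (hQ : NoCycles s t) {p i q : List E} (hp : p ≠ [])
    (hi : i ≠ []) (h : IsPath s t (p ++ i)) : p ++ i ≠ i ++ q := fun heq => by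
  refine hQ p (h.left_of_append hp) ?_
  rw [← src?_append i hp, heq, src?_append q hi, (isPath_append_iff (h.left_of_append hp)
    (h.right_of_append hi)).mp h]

lemma NoCycles.append_ne_append_right (hQ : NoCycles s t) {p i q : List E} (hp : p ≠ [])
    (hi : i ≠ []) (h : IsPath s t (i ++ p)) : i ++ p ≠ q ++ i := fun heq => by
  refine hQ p (h.right_of_append hp) ?_
  rw [← tgt?_append i hp, heq, tgt?_append q hi, (isPath_append_iff (h.left_of_append hi)
    (h.right_of_append hp)).mp h]

lemma NoCycles.eq_of_append_eq (hQ : NoCycles s t) {p q i : PathQ s t} {z : List E}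
    (hz : IsPath s t z) (hp : z = p.val ++ i.val ∨ z = i.val ++ p.val)
    (hq : z = q.val ++ i.val ∨ z = i.val ++ q.val) : p = q := by
  rcases hp with rfl | rfl <;> rcases hq with hq | hq
  · exact Subtype.ext (List.append_cancel_right hq)
  · exact absurd hq (hQ.append_ne_append_left p.2.1 i.2.1 hz)
  · exact absurd hq (hQ.append_ne_append_right p.2.1 i.2.1 hz)
  · exact Subtype.ext (List.append_cancel_left hq)

end NoCycles


section Bracket

variable {s t : E → V}

variable (s t) in
def bracket : nQ s t →ₗ[ℝ] nQ s t →ₗ[ℝ] nQ s t :=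
  Finsupp.linearCombination ℝ fun x => Finsupp.linearCombination ℝ (braBasis s t x)

lemma bra_eq_bracket (u v : nQ s t) : bra s t u v = bracket s t u v := by
  simp only [bra, bracket, Finsupp.linearCombination_apply, LinearMap.finsupp_sum_apply,
    LinearMap.smul_apply, Finsupp.smul_sum, smul_smul]

lemma bra_single_single (x y : PathQ s t) (c d : ℝ) :
    bra s t (Finsupp.single x c) (Finsupp.single y d) = (c * d) • braBasis s t x y := by
  simp [bra_eq_bracket, bracket, smul_smul]

lemma braBasis_of_isPath {x y : PathQ s t} (h : IsPath s t (x.val ++ y.val)) :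
    braBasis s t x y = Finsupp.single ⟨x.val ++ y.val, h⟩ 1 :=
  dif_pos h

lemma braBasis_of_isPath_swap {x y : PathQ s t} (h : ¬IsPath s t (x.val ++ y.val))
    (h' : IsPath s t (y.val ++ x.val)) :
    braBasis s t x y = -Finsupp.single ⟨y.val ++ x.val, h'⟩ 1 := by
  rw [braBasis, dif_neg h, dif_pos h']

lemma braBasis_of_not_isPath {x y : PathQ s t} (h : ¬IsPath s t (x.val ++ y.val))
    (h' : ¬IsPath s t (y.val ++ x.val)) : braBasis s t x y = 0 := by
  rw [braBasis, dif_neg h, dif_neg h']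

lemma diagonalMap_braBasis {d : PathQ s t → ℝ}
    (hd : ∀ x y (h : IsPath s t (x.val ++ y.val)), d ⟨x.val ++ y.val, h⟩ = d x + d y)
    (x y : PathQ s t) :
    diagonalMap d (braBasis s t x y) = (d x + d y) • braBasis s t x y := by
  by_cases h : IsPath s t (x.val ++ y.val)
  · simp [braBasis_of_isPath h, diagonalMap_single, hd x y h]
  by_cases h' : IsPath s t (y.val ++ x.val)
  · simp [braBasis_of_isPath_swap h h', diagonalMap_single, hd y x h', add_comm]
  · simp [braBasis_of_not_isPath h h']

lemma diagonalMap_bra {d : PathQ s t → ℝ}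
    (hd : ∀ x y (h : IsPath s t (x.val ++ y.val)), d ⟨x.val ++ y.val, h⟩ = d x + d y)
    (u v : nQ s t) :
    diagonalMap d (bra s t u v) = bra s t (diagonalMap d u) v + bra s t u (diagonalMap d v) := by
  simp only [bra_eq_bracket]
  suffices (bracket s t).compr₂ (diagonalMap d) =
      (bracket s t).comp (diagonalMap d) + (bracket s t).compl₂ (diagonalMap d) from
    congrArg (fun B => B u v) this
  ext x y
  simp [← bra_eq_bracket, bra_single_single, diagonalMap_single, diagonalMap_braBasis hd,
    add_smul]

end Bracket

section StructureConstants

variable {s t : E → V}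

lemma eq_append_of_braBasis_apply_ne_zero {x y z : PathQ s t} (h : braBasis s t x y z ≠ 0) :
    z.val = x.val ++ y.val ∨ z.val = y.val ++ x.val := by
  unfold braBasis at h
  split_ifs at h <;> simp only [Finsupp.neg_apply, Finsupp.single_apply, ne_eq, ite_eq_right_iff,
    neg_eq_zero, Finsupp.coe_zero, Pi.zero_apply, not_true_eq_false] at h <;> grind

lemma braBasis_apply_mul_self (hQ : NoCycles s t) (x y z : PathQ s t) :
    braBasis s t x y z * braBasis s t x y z =
      (if x.val ++ y.val = z.val then 1 else 0) + (if y.val ++ x.val = z.val then 1 else 0) := by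
  have hxy : x.val ++ y.val = z.val → IsPath s t (x.val ++ y.val) := fun e => e ▸ z.2
  have hyx : y.val ++ x.val = z.val → IsPath s t (y.val ++ x.val) := fun e => e ▸ z.2
  by_cases h : IsPath s t (x.val ++ y.val)
  · have h' := hQ.not_isPath_append_swap x.2 y.2 h
    simp only [braBasis_of_isPath h, Finsupp.single_apply, Subtype.ext_iff]
    split_ifs <;> simp_all
  by_cases h' : IsPath s t (y.val ++ x.val)
  · simp only [braBasis_of_isPath_swap h h', Finsupp.neg_apply, Finsupp.single_apply,
      Subtype.ext_iff]
    split_ifs <;> simp_all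
  · simp only [braBasis_of_not_isPath h h', Finsupp.coe_zero, Pi.zero_apply, mul_zero]
    split_ifs <;> simp_all

lemma braBasis_apply_mul_apply_of_ne (hQ : NoCycles s t) {p q : PathQ s t} (hpq : p ≠ q)
    (x y : PathQ s t) :
    braBasis s t x y p * braBasis s t x y q = 0 := by
  by_contra h
  obtain ⟨hp, hq⟩ := mul_ne_zero_iff.mp h
  rcases eq_append_of_braBasis_apply_ne_zero hp with hp | hp <;>
    rcases eq_append_of_braBasis_apply_ne_zero hq with hq | hq
  · exact hpq (Subtype.ext (hp.trans hq.symm))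
  · exact hQ.not_isPath_append_swap x.2 y.2 (hp ▸ p.2) (hq ▸ q.2)
  · exact hQ.not_isPath_append_swap x.2 y.2 (hq ▸ q.2) (hp ▸ p.2)
  · exact hpq (Subtype.ext (hp.trans hq.symm))

lemma braBasis_apply_mul_braBasis_apply_of_ne (hQ : NoCycles s t) {p q : PathQ s t} (hpq : p ≠ q)
    (i z : PathQ s t) :
    braBasis s t p i z * braBasis s t q i z = 0 := by
  by_contra h
  obtain ⟨hp, hq⟩ := mul_ne_zero_iff.mp h
  exact hpq (hQ.eq_of_append_eq z.2 (eq_append_of_braBasis_apply_ne_zero hp)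
    (eq_append_of_braBasis_apply_ne_zero hq))

end StructureConstants

section Weights

variable (s t : E → V) [Fintype (PathQ s t)]

def numPathsFrom (v : V) : ℕ :=
  (Finset.univ.filter fun p : PathQ s t => src? s p.val = some v).card

def numPathsTo (v : V) : ℕ :=
  (Finset.univ.filter fun p : PathQ s t => tgt? t p.val = some v).card

def vertexWeight (v : V) : ℝ := 2 / (1 + numPathsFrom s t v + numPathsTo s t v)

def pathWeight (l : List E) : ℝ := (l.dropLast.map fun a => vertexWeight s t (t a)).prod

def interiorWeightSum (l : List E) : ℝ := (l.dropLast.map fun a => vertexWeight s t (t a)).sum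

abbrev pathForm : nQ s t →ₗ[ℝ] nQ s t →ₗ[ℝ] ℝ :=
  weightedForm fun p => pathWeight s t p.val

def ricciEigenvalue (p : PathQ s t) : ℝ :=
  interiorWeightSum s t p.val / 2 -
    (vertexWeight s t (pathTarget p) * numPathsFrom s t (pathTarget p) +
      vertexWeight s t (pathSource p) * numPathsTo s t (pathSource p)) / 2

variable {s t}

lemma vertexWeight_pos (v : V) : 0 < vertexWeight s t v := by
  unfold vertexWeight; positivity

lemma vertexWeight_mul (v : V) :
    vertexWeight s t v * (1 + numPathsFrom s t v + numPathsTo s t v) = 2 := by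
  unfold vertexWeight; field_simp

lemma pathWeight_pos (l : List E) : 0 < pathWeight s t l :=
  List.prod_pos fun _ hx => by
    obtain ⟨a, _, rfl⟩ := List.mem_map.mp hx
    exact vertexWeight_pos _

lemma pathWeight_cons_cons (a b : E) (l : List E) :
    pathWeight s t (a :: b :: l) = vertexWeight s t (t a) * pathWeight s t (b :: l) := by
  simp [pathWeight]

lemma dropLast_append_of_ne_nil {x y : List E} (hx : x ≠ []) (hy : y ≠ []) :
    (x ++ y).dropLast = x.dropLast ++ x.getLast hx :: y.dropLast := by
  rw [List.dropLast_append_of_ne_nil hy]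
  conv_lhs => rw [← List.dropLast_append_getLast hx]
  simp

lemma pathWeight_append {x y : List E} (hx : x ≠ []) (hy : y ≠ []) :
    pathWeight s t (x ++ y) =
      pathWeight s t x * vertexWeight s t (t (x.getLast hx)) * pathWeight s t y := by
  simp [pathWeight, dropLast_append_of_ne_nil hx hy, mul_assoc]

lemma interiorWeightSum_append {x y : List E} (hx : x ≠ []) (hy : y ≠ []) :
    interiorWeightSum s t (x ++ y) =
      interiorWeightSum s t x + vertexWeight s t (t (x.getLast hx)) + interiorWeightSum s t y := by
  simp [interiorWeightSum, dropLast_append_of_ne_nil hx hy, add_assoc]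

lemma ricciEigenvalue_append {x y : PathQ s t} (h : IsPath s t (x.val ++ y.val)) :
    ricciEigenvalue s t ⟨x.val ++ y.val, h⟩ =
      ricciEigenvalue s t x + ricciEigenvalue s t y + 1 := by
  have hv := vertexWeight_mul (s := s) (t := t) (pathTarget x)
  simp only [ricciEigenvalue, pathSource_append h, pathTarget_append h,
    interiorWeightSum_append x.2.1 y.2.1] at hv ⊢
  rw [show t (x.val.getLast x.2.1) = pathTarget x from rfl, ← pathTarget_eq_pathSource h]
  linarith

end Weights

section Ricci

variable {s t : E → V}

variable (s t) in
def ricciForm (B : nQ s t →ₗ[ℝ] nQ s t →ₗ[ℝ] ℝ) (X Y : nQ s t) : ℝ :=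
  -(1/2) * (∑ᶠ i : PathQ s t, ∑ᶠ j : PathQ s t,
      B (bra s t X (ebar s t B i)) (ebar s t B j) * B (bra s t Y (ebar s t B i)) (ebar s t B j))
    + (1/4) * (∑ᶠ i : PathQ s t, ∑ᶠ j : PathQ s t,
      B (bra s t (ebar s t B i) (ebar s t B j)) X * B (bra s t (ebar s t B i) (ebar s t B j)) Y)

variable [Fintype (PathQ s t)]

lemma ebar_weightedForm (w : PathQ s t → ℝ) (p : PathQ s t) :
    ebar s t (weightedForm w) p = Finsupp.single p (√(w p))⁻¹ := by
  rw [ebar, weightedForm_single_single, if_pos rfl, mul_one, mul_one, Finsupp.smul_single,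
    smul_eq_mul, mul_one]

lemma ricciForm_weightedForm_single {w : PathQ s t → ℝ} (hw : ∀ i, 0 ≤ w i)
    (p q : PathQ s t) :
    ricciForm s t (weightedForm w) (Finsupp.single p 1) (Finsupp.single q 1) =
      -(1/2) * ∑ i, (w i)⁻¹ * weightedForm w (braBasis s t p i) (braBasis s t q i) +
        (1/4) * ∑ i, ∑ j,
          (w i * w j)⁻¹ * (w p * w q) * (braBasis s t i j p * braBasis s t i j q) := by
  have hsq (i : PathQ s t) : (√(w i))⁻¹ * (√(w i))⁻¹ = (w i)⁻¹ := by
    rw [← mul_inv, Real.mul_self_sqrt (hw i)]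
  simp only [ricciForm, finsum_eq_sum_of_fintype, ebar_weightedForm,
    sum_weightedForm_mul_weightedForm_single hw]
  simp only [bra_single_single, map_smul, LinearMap.smul_apply, smul_eq_mul,
    weightedForm_single_right, one_mul, mul_one]
  congr 2 <;> refine Finset.sum_congr rfl fun i _ => ?_
  · rw [← hsq i]; ring
  · refine Finset.sum_congr rfl fun j _ => ?_
    rw [mul_inv, ← hsq i, ← hsq j]; ring

lemma pathForm_braBasis_self (hQ : NoCycles s t) (x y : PathQ s t) :
    pathForm s t (braBasis s t x y) (braBasis s t x y) =
      (if IsPath s t (x.val ++ y.val) then pathWeight s t (x.val ++ y.val) else 0) +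
        (if IsPath s t (y.val ++ x.val) then pathWeight s t (y.val ++ x.val) else 0) := by
  by_cases h : IsPath s t (x.val ++ y.val)
  · simp [braBasis_of_isPath h, weightedForm_single_single, h, hQ.not_isPath_append_swap x.2 y.2 h]
  by_cases h' : IsPath s t (y.val ++ x.val)
  · simp [braBasis_of_isPath_swap h h', weightedForm_single_single, h, h']
  · simp [braBasis_of_not_isPath h h', h, h']

lemma card_filter_isPath_append_left (p : PathQ s t) :
    (Finset.univ.filter fun i : PathQ s t => IsPath s t (p.val ++ i.val)).card =
      numPathsFrom s t (pathTarget p) := by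
  unfold numPathsFrom
  congr 1
  exact Finset.filter_congr fun i _ => by
    rw [isPath_append_iff p.2 i.2, tgt?_eq_pathTarget, eq_comm]

lemma card_filter_isPath_append_right (p : PathQ s t) :
    (Finset.univ.filter fun i : PathQ s t => IsPath s t (i.val ++ p.val)).card =
      numPathsTo s t (pathSource p) := by
  unfold numPathsTo
  congr 1
  exact Finset.filter_congr fun i _ => by rw [isPath_append_iff i.2 p.2, src?_eq_pathSource]

lemma sum_inv_pathWeight_mul_pathForm_braBasis_self (hQ : NoCycles s t) (p : PathQ s t) :
    ∑ i, (pathWeight s t i.val)⁻¹ * pathForm s t (braBasis s t p i) (braBasis s t p i) =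
      pathWeight s t p.val *
        (vertexWeight s t (pathTarget p) * numPathsFrom s t (pathTarget p) +
          vertexWeight s t (pathSource p) * numPathsTo s t (pathSource p)) := by
  have key (i : PathQ s t) :
      (pathWeight s t i.val)⁻¹ * pathForm s t (braBasis s t p i) (braBasis s t p i) =
        (if IsPath s t (p.val ++ i.val) then
          pathWeight s t p.val * vertexWeight s t (pathTarget p) else 0) +
        (if IsPath s t (i.val ++ p.val) then
          pathWeight s t p.val * vertexWeight s t (pathSource p) else 0) := by
    have hi := (pathWeight_pos (s := s) (t := t) i.val).ne'
    rw [pathForm_braBasis_self hQ, mul_add]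
    congr 1 <;> split_ifs with h
    · rw [pathWeight_append p.2.1 i.2.1]; field_simp; rfl
    · simp
    · rw [pathWeight_append i.2.1 p.2.1, ← pathTarget_eq_pathSource h]
      field_simp
      exact mul_comm _ _
    · simp
  simp only [key, Finset.sum_add_distrib, Finset.sum_ite, Finset.sum_const_zero, add_zero,
    Finset.sum_const, nsmul_eq_mul, card_filter_isPath_append_left,
    card_filter_isPath_append_right]
  ring

lemma sum_sum_ite_append_eq_sum_dropLast (p : PathQ s t) (g : E → ℝ) :
    ∑ i : PathQ s t, ∑ j : PathQ s t,
      (if i.val ++ j.val = p.val then g (i.val.getLast i.2.1) else 0) =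
        (p.val.dropLast.map g).sum := by
  rw [← Fin.sum_univ_fun_getElem, ← Finset.sum_product', ← Finset.sum_filter]
  -- a splitting `p = i ++ j` into two paths is determined by the cut position `|i| - 1`
  have hlen {i j : PathQ s t} (h : i.val ++ j.val = p.val) :
      i.val.length - 1 < p.val.dropLast.length := by
    have := congrArg List.length h
    have := List.length_pos_iff.mpr i.2.1
    have := List.length_pos_iff.mpr j.2.1
    simp only [List.length_append, List.length_dropLast] at *
    omega
  refine Finset.sum_bij (fun ij hij => ⟨ij.1.val.length - 1, hlen (Finset.mem_filter.mp hij).2⟩)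
    (fun _ _ => Finset.mem_univ _) ?_ ?_ ?_
  · rintro ⟨i, j⟩ hij ⟨i', j'⟩ hij' hk
    replace hij := (Finset.mem_filter.mp hij).2
    replace hij' := (Finset.mem_filter.mp hij').2
    have hl : i.val.length = i'.val.length := by
      have := List.length_pos_iff.mpr i.2.1
      have := List.length_pos_iff.mpr i'.2.1
      simp only [Fin.mk.injEq] at hk
      omega
    obtain ⟨h1, h2⟩ := List.append_inj (hij.trans hij'.symm) hl
    exact Prod.ext (Subtype.ext h1) (Subtype.ext h2)
  · intro k _
    have hk : k.val + 1 < p.val.length := by have := k.2; simp at this; omega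
    refine ⟨(⟨p.val.take (k + 1), by simp [p.2.1], p.2.2.take _⟩,
      ⟨p.val.drop (k + 1), by simp; omega, p.2.2.drop _⟩), by simp, ?_⟩
    ext
    simp; omega
  · rintro ⟨i, j⟩ hij
    replace hij := (Finset.mem_filter.mp hij).2
    simp only [List.getElem_dropLast, List.getLast_eq_getElem]
    congr 1
    simp only [← hij]
    exact (List.getElem_append_left _).symm

lemma sum_inv_pathWeight_mul_braBasis_apply_mul_self (hQ : NoCycles s t) (p : PathQ s t) :
    ∑ i, ∑ j, (pathWeight s t i.val * pathWeight s t j.val)⁻¹ *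
        (braBasis s t i j p * braBasis s t i j p) =
      2 * interiorWeightSum s t p.val / pathWeight s t p.val := by
  have hsplit : ∑ i : PathQ s t, ∑ j : PathQ s t,
      (pathWeight s t i.val * pathWeight s t j.val)⁻¹ *
        (if i.val ++ j.val = p.val then 1 else 0) =
      interiorWeightSum s t p.val / pathWeight s t p.val := by
    have hp := (pathWeight_pos (s := s) (t := t) p.val).ne'
    rw [interiorWeightSum, ← sum_sum_ite_append_eq_sum_dropLast, Finset.sum_div]
    refine Finset.sum_congr rfl fun i _ => ?_
    rw [Finset.sum_div]
    refine Finset.sum_congr rfl fun j _ => ?_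
    split_ifs with h
    · rw [← h, pathWeight_append i.2.1 j.2.1]
      have := (pathWeight_pos (s := s) (t := t) i.val).ne'
      have := (pathWeight_pos (s := s) (t := t) j.val).ne'
      have := (vertexWeight_pos (s := s) (t := t) (t (i.val.getLast i.2.1))).ne'
      field_simp
    · simp
  simp only [braBasis_apply_mul_self hQ, mul_add, Finset.sum_add_distrib]
  conv_lhs => arg 2; rw [Finset.sum_comm]
  simp only [mul_comm (pathWeight s t _) (pathWeight s t _)]
  rw [hsplit]
  ring

lemma ricciForm_pathForm_single (hQ : NoCycles s t) (p q : PathQ s t) :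
    ricciForm s t (pathForm s t) (Finsupp.single p 1) (Finsupp.single q 1) =
      if p = q then pathWeight s t p.val * ricciEigenvalue s t p else 0 := by
  rw [ricciForm_weightedForm_single fun i => (pathWeight_pos _).le]
  split_ifs with hpq
  · subst hpq
    simp only [mul_right_comm _ (pathWeight s t p.val * pathWeight s t p.val), ← Finset.sum_mul]
    rw [sum_inv_pathWeight_mul_pathForm_braBasis_self hQ,
      sum_inv_pathWeight_mul_braBasis_apply_mul_self hQ, ricciEigenvalue]
    have := (pathWeight_pos (s := s) (t := t) p.val).ne'
    field_simp
    ring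
  · simp [weightedForm_apply, braBasis_apply_mul_braBasis_apply_of_ne hQ hpq,
      braBasis_apply_mul_apply_of_ne hQ hpq]

lemma eq_diagonalMap_ricciEigenvalue (hQ : NoCycles s t)
    {Ric : nQ s t →ₗ[ℝ] nQ s t}
    (hRic : ∀ X Y, pathForm s t (Ric X) Y = ricciForm s t (pathForm s t) X Y) :
    Ric = diagonalMap (ricciEigenvalue s t) :=
  Finsupp.basisSingleOne.ext fun p =>
    eq_of_weightedForm_single_eq (fun i => (pathWeight_pos _).ne') fun q => by
      rw [Finsupp.coe_basisSingleOne, hRic, ricciForm_pathForm_single hQ, diagonalMap_single,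
        weightedForm_single_single]
      split_ifs <;> ring

end Ricci

section Automorphisms

variable {s t : E → V} {f : E → E}

lemma IsQuivAut.isPath_map_iff (hf : IsQuivAut s t f) {l : List E} :
    IsPath s t (l.map f) ↔ IsPath s t l := by
  simp only [isPath_iff, ne_eq, List.map_eq_nil_iff, List.isChain_map]
  exact and_congr_right fun _ => List.IsChain.iff fun a b => (hf.2 a b).symm

def IsQuivAut.pathEquiv (hf : IsQuivAut s t f) : PathQ s t ≃ PathQ s t :=
  (Equiv.listEquivOfEquiv (Equiv.ofBijective f hf.1)).subtypeEquiv fun _ => hf.isPath_map_iff.symm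

lemma IsQuivAut.pathEquiv_val (hf : IsQuivAut s t f) (p : PathQ s t) :
    (hf.pathEquiv p).val = p.val.map f :=
  rfl

variable [Fintype (PathQ s t)]

lemma IsQuivAut.numPathsFrom_eq (hf : IsQuivAut s t f) (a : E) :
    numPathsFrom s t (t (f a)) = numPathsFrom s t (t a) :=
  (Finset.card_equiv hf.pathEquiv fun p => by
    obtain ⟨_ | ⟨c, l⟩, hp⟩ := p
    · exact absurd rfl hp.1
    · simp [pathEquiv_val, src?, eq_comm (a := s _), hf.2 a c]).symm

lemma IsQuivAut.numPathsTo_eq (hf : IsQuivAut s t f) {a b : E} (hab : t a = s b) :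
    numPathsTo s t (t (f a)) = numPathsTo s t (t a) := by
  rw [hab, (hf.2 a b).mp hab]
  refine (Finset.card_equiv hf.pathEquiv fun p => ?_).symm
  simp [pathEquiv_val, tgt?, List.getLast?_eq_some_getLast p.2.1, hf.2 _ b]

lemma IsQuivAut.vertexWeight_eq (hf : IsQuivAut s t f) {a b : E} (hab : t a = s b) :
    vertexWeight s t (t (f a)) = vertexWeight s t (t a) := by
  rw [vertexWeight, vertexWeight, hf.numPathsFrom_eq, hf.numPathsTo_eq hab]

lemma IsQuivAut.pathWeight_map (hf : IsQuivAut s t f) {l : List E}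
    (hl : l.IsChain fun a b => t a = s b) : pathWeight s t (l.map f) = pathWeight s t l := by
  induction hl with
  | nil => rfl
  | singleton a => simp [pathWeight]
  | cons_cons hab _ ih =>
    rw [List.map_cons, List.map_cons, pathWeight_cons_cons, ← List.map_cons, ih,
      hf.vertexWeight_eq hab, pathWeight_cons_cons]

lemma IsQuivAut.pathForm_apply_apply (hf : IsQuivAut s t f) {T : nQ s t →ₗ[ℝ] nQ s t}
    (hT : ActsAs s t f T) (u v : nQ s t) : pathForm s t (T u) (T v) = pathForm s t u v := by
  have hTe : T = (Finsupp.domLCongr hf.pathEquiv).toLinearMap := by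
    refine Finsupp.lhom_ext' fun p => LinearMap.ext_ring ?_
    simp only [LinearMap.comp_apply, Finsupp.lsingle_apply, LinearEquiv.coe_coe,
      Finsupp.domLCongr_single]
    exact hT p.val p.2 _
  rw [hTe]
  exact weightedForm_equivMapDomain _ (fun p => hf.pathWeight_map p.2.2) u v

end Automorphisms

theorem nQ_admits_algebraic_ricci_soliton_general [Finite E] (s t : E → V)
    (hQ : NoCycles s t) :
    ∃ B : nQ s t →ₗ[ℝ] nQ s t →ₗ[ℝ] ℝ,
      (∀ u v : nQ s t, B u v = B v u) ∧
      (∀ u : nQ s t, u ≠ 0 → 0 < B u u) ∧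
      (∀ p q : PathQ s t, p ≠ q →
        B (Finsupp.single p 1) (Finsupp.single q 1) = 0) ∧
      (∀ f : E → E, IsQuivAut s t f → ∀ T : nQ s t →ₗ[ℝ] nQ s t, ActsAs s t f T →
        ∀ u v : nQ s t, B (T u) (T v) = B u v) ∧
      ∃ D : nQ s t →ₗ[ℝ] nQ s t,
        (∀ u v : nQ s t, D (bra s t u v) = bra s t (D u) v + bra s t u (D v)) ∧
        (∀ p : PathQ s t, ∃ c : ℝ,
          D (Finsupp.single p 1) = c • Finsupp.single p 1) ∧
        (∀ Ric : nQ s t →ₗ[ℝ] nQ s t,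
          (∀ X Y : nQ s t, B (Ric X) Y =
            -(1/2) * (∑ᶠ i : PathQ s t, ∑ᶠ j : PathQ s t,
              B (bra s t X (ebar s t B i)) (ebar s t B j) *
                B (bra s t Y (ebar s t B i)) (ebar s t B j))
            + (1/4) * (∑ᶠ i : PathQ s t, ∑ᶠ j : PathQ s t,
              B (bra s t (ebar s t B i) (ebar s t B j)) X *
                B (bra s t (ebar s t B i) (ebar s t B j)) Y)) →
          Ric = -(LinearMap.id : nQ s t →ₗ[ℝ] nQ s t) + D) := by
  have := finite_pathQ hQ
  have := Fintype.ofFinite (PathQ s t)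
  refine ⟨pathForm s t, weightedForm_comm,
    fun u => weightedForm_self_pos fun p => pathWeight_pos _,
    fun p q hpq => by simp [weightedForm_single_single, hpq],
    fun f hf T hT => hf.pathForm_apply_apply hT,
    diagonalMap fun p => ricciEigenvalue s t p + 1, diagonalMap_bra fun x y h => ?_,
    fun p => ⟨ricciEigenvalue s t p + 1, by simp [diagonalMap_single, Finsupp.smul_single]⟩,
    fun Ric hRic => ?_⟩
  · rw [ricciEigenvalue_append h]
    ring
  · rw [neg_id_add_diagonalMap_add_one, eq_diagonalMap_ricciEigenvalue hQ hRic]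

/-- **Main theorem.** Let `Q` be a finite quiver without cycles. Then
there exists an inner product `⟨,⟩ = B` on `n_Q` such that: (ii) `Path(Q)` is an
orthogonal basis; (iii) `B` is preserved by the action of `Aut(Q)`; and (i) `B` is an
algebraic Ricci soliton: the Ricci operator of `(n_Q, B)` (determined by the standard
formula with respect to the orthonormal basis of normalized paths) satisfies
`Ric = -id + D` for a derivation `D` of `n_Q` which is diagonal with respect to
`Path(Q)`. -/
theorem nQ_admits_algebraic_ricci_soliton [Finite V] [Finite E] (s t : E → V)
    (hQ : NoCycles s t) :
    ∃ B : nQ s t →ₗ[ℝ] nQ s t →ₗ[ℝ] ℝ,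
      (∀ u v : nQ s t, B u v = B v u) ∧
      (∀ u : nQ s t, u ≠ 0 → 0 < B u u) ∧
      (∀ p q : PathQ s t, p ≠ q →
        B (Finsupp.single p 1) (Finsupp.single q 1) = 0) ∧
      (∀ f : E → E, IsQuivAut s t f → ∀ T : nQ s t →ₗ[ℝ] nQ s t, ActsAs s t f T →
        ∀ u v : nQ s t, B (T u) (T v) = B u v) ∧
      ∃ D : nQ s t →ₗ[ℝ] nQ s t,
        (∀ u v : nQ s t, D (bra s t u v) = bra s t (D u) v + bra s t u (D v)) ∧
        (∀ p : PathQ s t, ∃ c : ℝ,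
          D (Finsupp.single p 1) = c • Finsupp.single p 1) ∧
        (∀ Ric : nQ s t →ₗ[ℝ] nQ s t,
          (∀ X Y : nQ s t, B (Ric X) Y =
            -(1/2) * (∑ᶠ i : PathQ s t, ∑ᶠ j : PathQ s t,
              B (bra s t X (ebar s t B i)) (ebar s t B j) *
                B (bra s t Y (ebar s t B i)) (ebar s t B j))
            + (1/4) * (∑ᶠ i : PathQ s t, ∑ᶠ j : PathQ s t,
              B (bra s t (ebar s t B i) (ebar s t B j)) X *
                B (bra s t (ebar s t B i) (ebar s t B j)) Y)) →
          Ric = -(LinearMap.id : nQ s t →ₗ[ℝ] nQ s t) + D) :=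
  nQ_admits_algebraic_ricci_soliton_general s t hQ

end
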